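/- arXiv:1210.7908 — 2 statements merged into one kernel-verified Lean document; each statement's English description precedes it below -/
import Mathlib

section
/- Let R be a symmetrised set of reduced words satisfying the small-cancellation condition C'(λ), let r ∈ R be a relator that is not a proper power in the free group (i.e., r ≠ sᵐ for every word s and every integer m ≥ 2), let w be a nonempty reduced word, and let k ≥ 2 be an integer. If the word wᵏ (the concatenation of k copies of w, assumed reduced) is an initial segment of r, then (k−1)·|w| < λ·|r|. -/
/-- Words over the alphabet `X ∪ X⁻¹`: a letter is a pair `(x, b)`,
where `b = true` means `x` and `b = false` means `x⁻¹`. -/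
abbrev Word (X : Type) := List (X × Bool)

/-- The inverse of a letter. -/
def invLetter {X : Type} (a : X × Bool) : X × Bool := (a.1, !a.2)

/-- A word is reduced if it contains no adjacent pair of mutually inverse letters. -/
def Reduced {X : Type} (w : Word X) : Prop :=
  List.Chain' (fun a b => b ≠ invLetter a) w

/-- The formal inverse of a word: reverse the word and invert each letter. -/
def wordInv {X : Type} (w : Word X) : Word X :=
  (w.map invLetter).reverse

/-- The cyclic permutation of a word by `k` letters. -/
def cyclicPerm {X : Type} (w : Word X) (k : ℕ) : Word X :=
  w.drop k ++ w.take k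

/-- The concatenation of `n` copies of a word. -/
def wordPow {X : Type} (w : Word X) (n : ℕ) : Word X :=
  (List.replicate n w).flatten

/-- A set of words is symmetrised if it is closed under taking formal inverses
and cyclic permutations. -/
def Symmetrised {X : Type} (R : Set (Word X)) : Prop :=
  ∀ r ∈ R, wordInv r ∈ R ∧ ∀ k : ℕ, cyclicPerm r k ∈ R

/-- The `C'(λ)` small-cancellation condition (the metric piece condition): for any two
distinct relators `r₁, r₂ ∈ R`, every common initial segment `v` of `r₁` and `r₂`
has length `< λ·|r₁|`. -/
def SmallCancellation {X : Type} (R : Set (Word X)) (lam : ℝ) : Prop :=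
  ∀ r₁ ∈ R, ∀ r₂ ∈ R, r₁ ≠ r₂ →
    ∀ v : Word X, v <+: r₁ → v <+: r₂ → (v.length : ℝ) < lam * r₁.length

/-!
Write `r = wᵏ v`. Cyclically permuting `r` by `|w|` letters gives `wᵏ⁻¹ v w`, so `wᵏ⁻¹` is a
common initial segment of `r` and of this permutation, which again lies in `R`. The two relators
differ: a word that equals its cyclic permutation by `0 < n < |r|` letters factors as `r = x y = y x`
with `x, y` nonempty, hence (Lyndon–Schützenberger) `x` and `y` are powers of a common word and `r`
is a proper power. So `wᵏ⁻¹` is a piece and `C'(λ)` bounds its length.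
-/

variable {X : Type}

lemma wordPow_one (w : Word X) : wordPow w 1 = w := by
  simp [wordPow]

lemma wordPow_add (w : Word X) (m n : ℕ) :
    wordPow w (m + n) = wordPow w m ++ wordPow w n := by
  simp only [wordPow, List.replicate_add, List.flatten_append]

lemma wordPow_succ (w : Word X) (n : ℕ) : wordPow w (n + 1) = w ++ wordPow w n := by
  rw [add_comm, wordPow_add, wordPow_one]

lemma length_wordPow (w : Word X) (n : ℕ) : (wordPow w n).length = n * w.length := by
  simp [wordPow]

lemma mk_wordPow (w : Word X) (n : ℕ) :
    FreeGroup.mk (wordPow w n) = FreeGroup.mk w ^ n := by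
  rw [FreeGroup.pow_mk]
  rfl

lemma wordPow_prefix_wordPow (w : Word X) {m n : ℕ} (h : m ≤ n) :
    wordPow w m <+: wordPow w n := by
  obtain ⟨d, rfl⟩ := Nat.exists_eq_add_of_le h
  exact ⟨wordPow w d, (wordPow_add w m d).symm⟩

/-- Lyndon–Schützenberger. -/
theorem exists_wordPow_of_append_comm {u v : Word X} (h : u ++ v = v ++ u) :
    ∃ t a b, u = wordPow t a ∧ v = wordPow t b := by
  obtain ⟨n, hn⟩ : ∃ n, u.length + v.length = n := ⟨_, rfl⟩
  induction n using Nat.strong_induction_on generalizing u v with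
  | _ n ih =>
  wlog hle : u.length ≤ v.length generalizing u v
  · obtain ⟨t, a, b, hu, hv⟩ := this h.symm (by omega) (by omega)
    exact ⟨t, b, a, hv, hu⟩
  rcases eq_or_ne u [] with rfl | hu
  · exact ⟨v, 0, 1, rfl, (wordPow_one v).symm⟩
  obtain ⟨v', rfl⟩ : u <+: v :=
    List.prefix_of_prefix_length_le (h ▸ List.prefix_append u v) (List.prefix_append v u) hle
  have h' : u ++ v' = v' ++ u :=
    List.append_cancel_left (by simpa only [List.append_assoc] using h)
  have hlt : u.length + v'.length < n := by
    have := List.length_pos_iff.2 hu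
    simp only [← hn, List.length_append]
    omega
  obtain ⟨t, a, b, rfl, rfl⟩ := ih _ hlt h' rfl
  exact ⟨t, a, a + b, rfl, (wordPow_add t a b).symm⟩

lemma exists_eq_wordPow_of_cyclicPerm_eq_self {r : Word X} {n : ℕ} (hn₀ : 0 < n)
    (hn : n < r.length) (h : cyclicPerm r n = r) : ∃ t m, 2 ≤ m ∧ r = wordPow t m := by
  have hcomm : r.take n ++ r.drop n = r.drop n ++ r.take n := by
    rw [List.take_append_drop]
    exact h.symm
  obtain ⟨t, a, b, ha, hb⟩ := exists_wordPow_of_append_comm hcomm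
  have ha₀ : a ≠ 0 := by
    rintro rfl
    have := congrArg List.length ha
    rw [List.length_take, length_wordPow] at this
    omega
  have hb₀ : b ≠ 0 := by
    rintro rfl
    have := congrArg List.length hb
    rw [List.length_drop, length_wordPow] at this
    omega
  refine ⟨t, a + b, by omega, ?_⟩
  rw [wordPow_add, ← ha, ← hb, List.take_append_drop]

lemma wordPow_prefix_cyclicPerm {w r : Word X} {n : ℕ} (h : wordPow w (n + 1) <+: r) :
    wordPow w n <+: cyclicPerm r w.length := by
  obtain ⟨v, rfl⟩ := h
  simp only [cyclicPerm, wordPow_succ, List.append_assoc, List.drop_left, List.take_left]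
  exact List.prefix_append _ _

theorem power_prefix_of_relator_general {X : Type} (R : Set (Word X)) (lam : ℝ)
    (hsym : Symmetrised R)
    (hsc : SmallCancellation R lam)
    (r : Word X) (hr : r ∈ R)
    (hnp : ∀ (s : Word X) (m : ℕ), 2 ≤ m → FreeGroup.mk r ≠ (FreeGroup.mk s) ^ m)
    (w : Word X) (hwne : w ≠ [])
    (k : ℕ) (hk : 2 ≤ k)
    (hpref : wordPow w k <+: r) :
    (((k - 1 : ℕ) * w.length : ℕ) : ℝ) < lam * r.length := by
  obtain ⟨j, rfl⟩ := Nat.exists_eq_add_of_le' hk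
  have hw₀ : 0 < w.length := List.length_pos_iff.2 hwne
  have hwr : w.length < r.length := by
    have := hpref.length_le
    rw [length_wordPow] at this
    nlinarith
  have hne : r ≠ cyclicPerm r w.length := fun h => by
    obtain ⟨t, m, hm, hrt⟩ := exists_eq_wordPow_of_cyclicPerm_eq_self hw₀ hwr h.symm
    exact hnp t m hm (by rw [hrt, mk_wordPow])
  have hpiece := hsc r hr _ ((hsym r hr).2 _) hne (wordPow w (j + 1))
    ((wordPow_prefix_wordPow w (by omega)).trans hpref) (wordPow_prefix_cyclicPerm hpref)
  simpa [length_wordPow] using hpiece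

/-- If `R` is a symmetrised set of reduced words satisfying `C'(λ)`, `r ∈ R` is not a proper
power in the free group, `w` is a nonempty reduced word, `k ≥ 2`, and `wᵏ` (assumed reduced)
is an initial segment of `r`, then `(k−1)·|w| < λ·|r|`. -/
theorem power_prefix_of_relator {X : Type} (R : Set (Word X)) (lam : ℝ)
    (hR : ∀ r ∈ R, Reduced r)
    (hsym : Symmetrised R)
    (hsc : SmallCancellation R lam)
    (r : Word X) (hr : r ∈ R)
    (hnp : ∀ (s : Word X) (m : ℕ), 2 ≤ m → FreeGroup.mk r ≠ (FreeGroup.mk s) ^ m)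
    (w : Word X) (hw : Reduced w) (hwne : w ≠ [])
    (k : ℕ) (hk : 2 ≤ k)
    (hpowred : Reduced (wordPow w k))
    (hpref : wordPow w k <+: r) :
    (((k - 1 : ℕ) * w.length : ℕ) : ℝ) < lam * r.length :=
  power_prefix_of_relator_general R lam hsym hsc r hr hnp w hwne k hk hpref
end

section
/- There do not exist reduced words x, y, z and a nonempty reduced word w over the alphabet X ∪ X⁻¹ such that the concatenation x·y·z·x⁻¹·y⁻¹·z⁻¹ is a reduced word (no cancellation occurs at any of the six junctions) and is equal letter-for-letter (graphically) to the concatenation w·w·w. -/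
/-!
Write `n = |w|`. Comparing lengths gives `2(|x| + |y| + |z|) = 3n`, so some block `v ∈ {x, y, z}`
has `2|v| ≥ n`, and the reduced `n`-periodic word `w³` contains a factor `v Q v⁻¹` with `|Q| ≤ n`.
The `j`-th letter of `v⁻¹` is the inverse of the `j`-th letter of `v` counted from its end, and the
two stand `|Q| + 2j + 1` apart; for `j = ⌊(n - |Q|)/2⌋ < |v|` that distance is `n` or `n + 1`.
By periodicity some letter then equals the inverse of itself or of its predecessor, which is
impossible in a reduced word.
-/

open List

lemma List.HasPeriod.getElem_add {α : Type*} {l : List α} {p : ℕ} (h : l.HasPeriod p) (i : ℕ)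
    (hi : i + p < l.length) : l[i + p] = l[i] := by
  simpa [getElem?_pos, hi, show i < l.length by omega] using
    (hasPeriod_iff_getElem?.mp h i (by omega)).symm

section Words

variable {X : Type}

lemma invLetter_ne_self (a : X × Bool) : invLetter a ≠ a := by
  simp [invLetter, Prod.ext_iff]

@[simp]
lemma length_wordInv (v : Word X) : (wordInv v).length = v.length := by
  simp [wordInv]

lemma getElem_wordInv (v : Word X) (j : ℕ) (hj : j < (wordInv v).length) :
    (wordInv v)[j] = invLetter (v[v.length - 1 - j]'(by simp at hj; omega)) := by
  simp [wordInv, getElem_reverse]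

lemma Reduced.infix {l u : Word X} (h : Reduced l) (hu : u <:+: l) : Reduced u :=
  IsChain.infix h hu

lemma Reduced.getElem_succ_ne {l : Word X} (h : Reduced l) (i : ℕ) (hi : i + 1 < l.length) :
    l[i + 1] ≠ invLetter l[i] :=
  IsChain.getElem h i hi

lemma getElem_append_wordInv (v Q : Word X) (j : ℕ) (hj : j < v.length) :
    (v ++ Q ++ wordInv v)[v.length + Q.length + j]'(by simp; omega) =
      invLetter ((v ++ Q ++ wordInv v)[v.length - 1 - j]'(by simp; omega)) := by
  rw [getElem_append_right (by simp), getElem_append_left (by simp; omega),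
    getElem_append_left (by omega)]
  simp only [length_append, Nat.add_sub_cancel_left]
  exact getElem_wordInv v j (by simpa using hj)

theorem not_reduced_append_append_wordInv_of_hasPeriod {v Q : Word X} {n : ℕ}
    (hper : HasPeriod (v ++ Q ++ wordInv v) n) (hQ : Q.length ≤ n)
    (hn : n < 2 * v.length + Q.length) :
    ¬ Reduced (v ++ Q ++ wordInv v) := by
  intro hred
  set j := (n - Q.length) / 2
  have hj : j < v.length := by omega
  have hmirror := getElem_append_wordInv v Q j hj
  obtain hfix | hswap : v.length + Q.length + j = v.length - 1 - j + n ∨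
      v.length + Q.length + j = v.length - 1 - j + 1 + n := by omega
  · simp only [hfix, hper.getElem_add] at hmirror
    exact invLetter_ne_self _ hmirror.symm
  · simp only [hswap, hper.getElem_add] at hmirror
    exact hred.getElem_succ_ne _ _ hmirror

end Words

/-- There do not exist reduced words `x, y, z` and a nonempty reduced word `w` such that
the concatenation `x·y·z·x⁻¹·y⁻¹·z⁻¹` is reduced (no cancellation at any junction) and is
graphically equal to `w·w·w`. -/
theorem no_wicks_cube (X : Type) :
    ¬ ∃ (x y z w : Word X), Reduced x ∧ Reduced y ∧ Reduced z ∧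
        Reduced w ∧ w ≠ [] ∧
        Reduced (x ++ y ++ z ++ wordInv x ++ wordInv y ++ wordInv z) ∧
        x ++ y ++ z ++ wordInv x ++ wordInv y ++ wordInv z = w ++ w ++ w := by
  rintro ⟨x, y, z, w, -, -, -, -, hw, hred, heq⟩
  have hpos : 0 < w.length := length_pos_iff.mpr hw
  have hlen := congrArg length heq
  simp only [length_append, length_wordInv] at hlen
  have hper : HasPeriod (x ++ y ++ z ++ wordInv x ++ wordInv y ++ wordInv z) w.length :=
    heq ▸ by simp [HasPeriod]
  have hfactor : ∀ v Q : Word X, v ++ Q ++ wordInv v <:+: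
      x ++ y ++ z ++ wordInv x ++ wordInv y ++ wordInv z →
      Q.length ≤ w.length → w.length < 2 * v.length + Q.length → False :=
    fun v Q hvQ hQ hn =>
      not_reduced_append_append_wordInv_of_hasPeriod (hper.infix hvQ) hQ hn (hred.infix hvQ)
  rcases (by omega : w.length ≤ 2 * x.length ∨ w.length ≤ 2 * y.length ∨
      w.length ≤ 2 * z.length) with h | h | h
  · exact hfactor x (y ++ z) ⟨[], wordInv y ++ wordInv z, by simp⟩ (by simp; omega)
      (by simp; omega)
  · exact hfactor y (z ++ wordInv x) ⟨x, wordInv z, by simp⟩ (by simp; omega) (by simp; omega)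
  · exact hfactor z (wordInv x ++ wordInv y) ⟨x ++ y, [], by simp⟩ (by simp; omega)
      (by simp; omega)
end
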